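/- For every positive integer k and every k-bounded partition λ, the k-conjugate λ^{ω_k} is again a k-bounded partition, i.e. the row lengths of the skew diagram D(λ) = λ_1 ×^{(k)} ⋯ ×^{(k)} λ_n, read from bottom to top, form a weakly decreasing sequence of positive integers each at most k. -/

import Mathlib

/-- A partition: a weakly decreasing list of positive integers
(parts listed from largest to smallest). -/
def IsPartitionList (l : List ℕ) : Prop :=
  l.Pairwise (· ≥ ·) ∧ ∀ x ∈ l, 0 < x

/-- A `k`-bounded partition: a partition all of whose parts are at most `k`. -/
def IsKBoundedPartition (k : ℕ) (l : List ℕ) : Prop :=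
  IsPartitionList l ∧ ∀ x ∈ l, x ≤ k

/-- Row `i` of a diagram whose rows (listed bottom-to-top) are encoded as
(start column, length) pairs. -/
def rowOf (D : List (ℕ × ℕ)) (i : ℕ) : ℕ × ℕ := D.getD i (0, 0)

/-- `D` encodes a skew diagram (a difference of Young diagrams, rows listed from
bottom to top): all rows are nonempty and, going up, both the left ends and the
right ends of the rows move weakly to the left. -/
def IsSkewRows (D : List (ℕ × ℕ)) : Prop :=
  (∀ r ∈ D, 0 < r.2) ∧
  D.Chain' fun r r' => r'.1 ≤ r.1 ∧ r'.1 + r'.2 ≤ r.1 + r.2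

/-- Cell in row `i` (from the bottom), column `j`, belongs to the diagram `D`. -/
def InDiag (D : List (ℕ × ℕ)) (i j : ℕ) : Prop :=
  i < D.length ∧ (rowOf D i).1 ≤ j ∧ j < (rowOf D i).1 + (rowOf D i).2

/-- The arm of a cell: the number of cells of `D` strictly to its east. -/
def armLen (D : List (ℕ × ℕ)) (i j : ℕ) : ℕ :=
  (rowOf D i).1 + (rowOf D i).2 - 1 - j

/-- The leg of a cell: the number of cells of `D` strictly to its north. -/
def legLen (D : List (ℕ × ℕ)) (i j : ℕ) : ℕ :=
  ((Finset.range D.length).filter fun i' =>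
    i < i' ∧ (rowOf D i').1 ≤ j ∧ j < (rowOf D i').1 + (rowOf D i').2).card

/-- The hook-length of a cell of `D`. -/
def hookLen (D : List (ℕ × ℕ)) (i j : ℕ) : ℕ := armLen D i j + legLen D i j + 1

/-- All hook-lengths of `D` are at most `k`. -/
def HookBounded (k : ℕ) (D : List (ℕ × ℕ)) : Prop :=
  ∀ i j, InDiag D i j → hookLen D i j ≤ k

/-- Shift `D` one column to the right and adjoin a new column of `m` cells in
column `0`, occupying the `m` consecutive rows `h, …, h + m - 1`. -/
def addCol (m h : ℕ) (D : List (ℕ × ℕ)) : List (ℕ × ℕ) :=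
  (List.range (max D.length (h + m))).map fun i =>
    if h ≤ i ∧ i < h + m then
      if i < D.length then (0, (rowOf D i).1 + (rowOf D i).2 + 1) else (0, 1)
    else ((rowOf D i).1 + 1, (rowOf D i).2)

/-- The placement of the new column at height `h` yields a genuine skew diagram
(rows stay contiguous) whose hook-lengths are bounded by `k`. -/
def ColValid (k m h : ℕ) (D : List (ℕ × ℕ)) : Prop :=
  (∀ i, h ≤ i → i < h + m → i < D.length → (rowOf D i).1 = 0) ∧
  IsSkewRows (addCol m h D) ∧ HookBounded k (addCol m h D)

/-- `k`-multiplication `m ×^{(k)} D`: adjoin a first column of length `m` to `D`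
so that the result is a skew diagram with hook-lengths bounded by `k`, having as
few rows as possible (the valid placement heights `h` all satisfy
`h + m ≥ number of rows`, so the lowest valid placement has fewest rows). -/
noncomputable def kMul (k m : ℕ) (D : List (ℕ × ℕ)) : List (ℕ × ℕ) :=
  addCol m (sInf {h | ColValid k m h D}) D

/-- `D(λ)`: the skew diagram obtained by `k`-multiplying the parts of `λ` from
right to left, the innermost part giving a single column. -/
noncomputable def kSkewDiagram (k : ℕ) : List ℕ → List (ℕ × ℕ)
  | [] => []
  | m :: rest => kMul k m (kSkewDiagram k rest)

/-- The `k`-conjugate `λ^{ω_k}`: the row lengths of `D(λ)`, read from the bottom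
row to the top row. -/
noncomputable def kConjugate (k : ℕ) (l : List ℕ) : List ℕ :=
  (kSkewDiagram k l).map Prod.snd

/-! If the new column occupies rows `h, …, h + m - 1`, the rows below `h` are only shifted right,
the rows of `D` it meets gain one cell and the rows above `D` consist of one cell. So row lengths
can only stop decreasing between rows `h - 1` and `h`. There the bottom cell of the column has
hook-length `len h + m ≤ k`, while minimality of `h` forces `k < len (h - 1) + m`, since otherwise
the column could be moved one row down. This step needs that the rows starting in column `0` are
the top rows of `D`, at most `m` of them, and, when row `h - 1` does not start in column `0`, the
inequality left behind by the previous multiplication; both are carried along as an invariant.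
Finally, the first cell of a row has hook-length at least the row length. -/

lemma rowOf_eq_getElem {D : List (ℕ × ℕ)} {i : ℕ} (hi : i < D.length) : rowOf D i = D[i] :=
  List.getD_eq_getElem D (0, 0) hi

lemma isSkewRows_iff {D : List (ℕ × ℕ)} : IsSkewRows D ↔
    (∀ i, i < D.length → 0 < (rowOf D i).2) ∧
    (∀ i, i + 1 < D.length →
      (rowOf D (i + 1)).1 ≤ (rowOf D i).1 ∧
      (rowOf D (i + 1)).1 + (rowOf D (i + 1)).2 ≤ (rowOf D i).1 + (rowOf D i).2) := by
  show (∀ r ∈ D, 0 < r.2) ∧ D.IsChain _ ↔ _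
  simp only [List.isChain_iff_getElem, List.forall_mem_iff_getElem]
  constructor
  · rintro ⟨hpos, hchain⟩
    refine ⟨fun i hi => by simpa [rowOf_eq_getElem hi] using hpos i hi, fun i hi => ?_⟩
    simpa [rowOf_eq_getElem hi, rowOf_eq_getElem (by omega : i < D.length)] using hchain i hi
  · rintro ⟨hpos, hchain⟩
    refine ⟨fun i hi => by simpa [rowOf_eq_getElem hi] using hpos i hi, fun i hi => ?_⟩
    simpa [rowOf_eq_getElem hi, rowOf_eq_getElem (by omega : i < D.length)] using hchain i hi

def RowLenAntitone (D : List (ℕ × ℕ)) : Prop :=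
  ∀ i, i + 1 < D.length → (rowOf D (i + 1)).2 ≤ (rowOf D i).2

lemma rowLen_le_of_hookBounded {k : ℕ} {D : List (ℕ × ℕ)} (hsk : IsSkewRows D)
    (hhk : HookBounded k D) {i : ℕ} (hi : i < D.length) : (rowOf D i).2 ≤ k := by
  have hpos := (isSkewRows_iff.1 hsk).1 i hi
  have := hhk i (rowOf D i).1 ⟨hi, le_rfl, by omega⟩
  unfold hookLen armLen at this
  omega

lemma isKBoundedPartition_map_snd {k : ℕ} {D : List (ℕ × ℕ)} (hsk : IsSkewRows D)
    (hhk : HookBounded k D) (hdec : RowLenAntitone D) :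
    IsKBoundedPartition k (D.map Prod.snd) := by
  have htrans : IsTrans ℕ (· ≥ ·) := ⟨fun _ _ _ h₁ h₂ => le_trans h₂ h₁⟩
  refine ⟨⟨?_, ?_⟩, ?_⟩
  · rw [← List.isChain_iff_pairwise, List.isChain_iff_getElem]
    intro i hi
    simp only [List.length_map] at hi
    simpa [rowOf_eq_getElem hi, rowOf_eq_getElem (by omega : i < D.length)] using hdec i hi
  · simp only [List.forall_mem_iff_getElem, List.length_map, List.getElem_map]
    intro i hi
    simpa [rowOf_eq_getElem hi] using (isSkewRows_iff.1 hsk).1 i hi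
  · simp only [List.forall_mem_iff_getElem, List.length_map, List.getElem_map]
    intro i hi
    simpa [rowOf_eq_getElem hi] using rowLen_le_of_hookBounded hsk hhk hi

section addCol

variable {k m h i j : ℕ} {D : List (ℕ × ℕ)}

lemma length_addCol : (addCol m h D).length = max D.length (h + m) := by
  simp [addCol]

lemma rowOf_addCol (hi : i < max D.length (h + m)) :
    rowOf (addCol m h D) i =
      if h ≤ i ∧ i < h + m then
        if i < D.length then (0, (rowOf D i).1 + (rowOf D i).2 + 1) else (0, 1)
      else ((rowOf D i).1 + 1, (rowOf D i).2) := by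
  simp [rowOf, addCol, List.getD, hi]

lemma rowOf_addCol_of_lt (hhD : h ≤ D.length) (hih : i < h) :
    rowOf (addCol m h D) i = ((rowOf D i).1 + 1, (rowOf D i).2) := by
  rw [rowOf_addCol (by omega)]
  simp [show ¬(h ≤ i ∧ i < h + m) by omega]

lemma rowOf_addCol_of_length_le (hDi : D.length ≤ i) (hhi : h ≤ i) (him : i < h + m) :
    rowOf (addCol m h D) i = (0, 1) := by
  rw [rowOf_addCol (by omega)]
  simp [hhi, him, show ¬i < D.length by omega]

structure ColumnFits (m h : ℕ) (D : List (ℕ × ℕ)) : Prop where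
  le_length : h ≤ D.length
  length_le : D.length ≤ h + m
  start_eq_zero : ∀ i, h ≤ i → i < D.length → (rowOf D i).1 = 0

namespace ColumnFits

lemma length_addCol (hF : ColumnFits m h D) : (addCol m h D).length = h + m := by
  simp [_root_.length_addCol, hF.length_le]

lemma rowOf_addCol (hF : ColumnFits m h D) (hhi : h ≤ i) (hiD : i < D.length) :
    rowOf (addCol m h D) i = (0, (rowOf D i).2 + 1) := by
  rw [_root_.rowOf_addCol (by omega)]
  simp [show i < h + m by have := hF.length_le; omega, hhi, hiD, hF.start_eq_zero i hhi hiD]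

lemma start_addCol_eq_zero_iff (hF : ColumnFits m h D) (him : i < h + m) :
    (rowOf (addCol m h D) i).1 = 0 ↔ h ≤ i := by
  have hle := hF.le_length
  rcases lt_or_ge i h with hih | hhi
  · simp [rowOf_addCol_of_lt hle hih, hih]
  · rcases lt_or_ge i D.length with hiD | hDi
    · simp [hF.rowOf_addCol hhi hiD, hhi]
    · simp [rowOf_addCol_of_length_le hDi hhi him, hhi]

lemma legLen_addCol_zero (hF : ColumnFits m h D) (hhi : h ≤ i) (him : i < h + m) :
    legLen (addCol m h D) i 0 + (i + 1) = h + m := by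
  have hle := hF.le_length
  have hcol : (Finset.range (h + m)).filter (fun i' => i < i' ∧
      (rowOf (addCol m h D) i').1 ≤ 0 ∧
      0 < (rowOf (addCol m h D) i').1 + (rowOf (addCol m h D) i').2) =
        Finset.Ico (i + 1) (h + m) := by
    ext x
    simp only [Finset.mem_filter, Finset.mem_range, Finset.mem_Ico]
    rcases lt_or_ge x D.length with hxD | hDx
    · by_cases hhx : h ≤ x
      · rw [hF.rowOf_addCol hhx hxD]; omega
      · omega
    · by_cases hxm : x < h + m
      · rw [rowOf_addCol_of_length_le hDx (by omega) hxm]; omega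
      · omega
  rw [legLen, hF.length_addCol, hcol, Nat.card_Ico]
  omega

lemma legLen_addCol_succ (hF : ColumnFits m h D) :
    legLen (addCol m h D) i (j + 1) = legLen D i j := by
  have hle := hF.le_length
  unfold legLen
  rw [hF.length_addCol]
  congr 1
  ext x
  simp only [Finset.mem_filter, Finset.mem_range]
  rcases lt_or_ge x h with hxh | hhx
  · rw [rowOf_addCol_of_lt hle hxh]
    omega
  · rcases lt_or_ge x D.length with hxD | hDx
    · rw [hF.rowOf_addCol hhx hxD, hF.start_eq_zero x hhx hxD]
      have := hF.length_le
      omega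
    · constructor
      · rintro ⟨hxm, -, hx⟩
        rw [rowOf_addCol_of_length_le hDx hhx hxm] at hx
        omega
      · omega

lemma isSkewRows_addCol (hF : ColumnFits m h D) (hsk : IsSkewRows D) (hdec : RowLenAntitone D) :
    IsSkewRows (addCol m h D) := by
  have hle := hF.le_length
  rw [isSkewRows_iff] at hsk ⊢
  obtain ⟨hpos, hchain⟩ := hsk
  rw [hF.length_addCol]
  constructor
  · intro i hi
    rcases lt_or_ge i h with hih | hhi
    · rw [rowOf_addCol_of_lt hle hih]; exact hpos i (by omega)
    · rcases lt_or_ge i D.length with hiD | hDi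
      · simp [hF.rowOf_addCol hhi hiD]
      · simp [rowOf_addCol_of_length_le hDi hhi hi]
  · intro i hi
    rcases lt_or_ge (i + 1) h with hih | hhi
    · rw [rowOf_addCol_of_lt hle hih, rowOf_addCol_of_lt hle (by omega)]
      have := hchain i (by omega)
      dsimp only
      omega
    rcases lt_or_ge (i + 1) D.length with hiD | hDi
    · rw [hF.rowOf_addCol hhi hiD]
      have := hdec i hiD
      rcases lt_or_ge i h with hih | hhi'
      · rw [rowOf_addCol_of_lt hle hih]; dsimp only; omega
      · rw [hF.rowOf_addCol hhi' (by omega)]; dsimp only; omega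
    · rw [rowOf_addCol_of_length_le hDi hhi hi]
      rcases lt_or_ge i h with hih | hhi'
      · rw [rowOf_addCol_of_lt hle hih]; have := hpos i (by omega); dsimp only; omega
      rcases lt_or_ge i D.length with hiD' | hDi'
      · simp [hF.rowOf_addCol hhi' hiD']
      · simp [rowOf_addCol_of_length_le (m := m) hDi' hhi' (by omega)]

lemma hookBounded_addCol (hF : ColumnFits m h D) (hhk : HookBounded k D)
    (hcol : ∀ i, h ≤ i → i < D.length → (rowOf D i).2 + (h + m) ≤ k + i) (hmk : m ≤ k) :
    HookBounded k (addCol m h D) := by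
  have hle := hF.le_length
  rintro i j ⟨hi, hj₁, hj₂⟩
  rw [hF.length_addCol] at hi
  unfold hookLen armLen
  rcases lt_or_ge i h with hih | hhi
  · rw [rowOf_addCol_of_lt hle hih] at hj₁ hj₂ ⊢
    obtain ⟨j, rfl⟩ : ∃ j', j = j' + 1 := ⟨j - 1, by omega⟩
    have := hhk i j ⟨by omega, by omega, by omega⟩
    rw [hF.legLen_addCol_succ]
    unfold hookLen armLen at this
    omega
  rcases lt_or_ge i D.length with hiD | hDi
  · rw [hF.rowOf_addCol hhi hiD] at hj₁ hj₂ ⊢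
    rcases j with _ | j
    · have := hF.legLen_addCol_zero hhi hi
      have := hcol i hhi hiD
      omega
    · have := hhk i j ⟨hiD, by rw [hF.start_eq_zero i hhi hiD]; omega,
        by rw [hF.start_eq_zero i hhi hiD]; omega⟩
      rw [hF.legLen_addCol_succ]
      unfold hookLen armLen at this
      rw [hF.start_eq_zero i hhi hiD] at this
      omega
  · rw [rowOf_addCol_of_length_le hDi hhi hi] at hj₁ hj₂ ⊢
    obtain rfl : j = 0 := by omega
    have := hF.legLen_addCol_zero hhi hi
    omega

lemma rowLenAntitone_addCol (hF : ColumnFits m h D) (hsk : IsSkewRows D)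
    (hdec : RowLenAntitone D)
    (hstrict : ∀ g, g + 1 = h → g + 1 < D.length → (rowOf D (g + 1)).2 < (rowOf D g).2) :
    RowLenAntitone (addCol m h D) := by
  have hle := hF.le_length
  have hpos := (isSkewRows_iff.1 hsk).1
  intro i hi
  rw [hF.length_addCol] at hi
  rcases lt_or_ge (i + 1) h with hih | hhi
  · rw [rowOf_addCol_of_lt hle hih, rowOf_addCol_of_lt hle (by omega)]
    exact hdec i (by omega)
  rcases lt_or_ge (i + 1) D.length with hiD | hDi
  · rw [hF.rowOf_addCol hhi hiD]
    rcases lt_or_ge i h with hih | hhi'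
    · rw [rowOf_addCol_of_lt hle hih]
      exact hstrict i (by omega) (by omega)
    · rw [hF.rowOf_addCol hhi' (by omega)]
      exact Nat.succ_le_succ (hdec i hiD)
  · rw [rowOf_addCol_of_length_le hDi hhi hi]
    rcases lt_or_ge i h with hih | hhi'
    · rw [rowOf_addCol_of_lt hle hih]
      exact hpos i (by omega)
    rcases lt_or_ge i D.length with hiD' | hDi'
    · simp [hF.rowOf_addCol hhi' hiD']
    · rw [rowOf_addCol_of_length_le (m := m) hDi' hhi' (by omega)]

end ColumnFits

lemma ColValid.columnFits (hm : 0 < m) (hv : ColValid k m h D) : ColumnFits m h D := by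
  obtain ⟨hstart, hsk, -⟩ := hv
  have hsk := isSkewRows_iff.1 hsk
  rw [length_addCol] at hsk
  have le_length : h ≤ D.length := by
    by_contra! hlt
    have := hsk.1 D.length (by omega)
    rw [rowOf_addCol (by omega), if_neg (by omega)] at this
    simp [rowOf, List.getD_eq_getElem?_getD] at this
  have length_le : D.length ≤ h + m := by
    by_contra! hlt
    have htop : (rowOf (addCol m h D) (h + m - 1)).1 = 0 := by
      rw [rowOf_addCol (by omega), if_pos (by omega), if_pos (by omega)]
    have habove : (rowOf (addCol m h D) (h + m)).1 = (rowOf D (h + m)).1 + 1 := by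
      rw [rowOf_addCol (by omega), if_neg (by omega)]
    have := (hsk.2 (h + m - 1) (by omega)).1
    rw [htop, show h + m - 1 + 1 = h + m by omega, habove] at this
    omega
  exact ⟨le_length, length_le, fun i hhi hiD => hstart i hhi (by omega) hiD⟩

/-- The second condition bounds the hook-lengths of the new column's cells in rows of `D`. -/
lemma colValid_iff (hsk : IsSkewRows D) (hhk : HookBounded k D) (hdec : RowLenAntitone D)
    (hm : 0 < m) (hmk : m ≤ k) :
    ColValid k m h D ↔
      ColumnFits m h D ∧
        ∀ i, h ≤ i → i < D.length → (rowOf D i).2 + (h + m) ≤ k + i := by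
  constructor
  · intro hv
    have hF := hv.columnFits hm
    refine ⟨hF, fun i hhi hiD => ?_⟩
    have hrow := hF.rowOf_addCol hhi hiD
    have hhook := hv.2.2 i 0
      ⟨by rw [hF.length_addCol]; have := hF.length_le; omega, by simp [hrow]⟩
    have := hF.legLen_addCol_zero hhi (by have := hF.length_le; omega)
    unfold hookLen armLen at hhook
    rw [hrow] at hhook
    simp only at hhook
    omega
  · rintro ⟨hF, hcol⟩
    exact ⟨fun i hhi _ hiD => hF.start_eq_zero i hhi hiD, hF.isSkewRows_addCol hsk hdec,
      hF.hookBounded_addCol hhk hcol hmk⟩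

end addCol

noncomputable def kMulHeight (k m : ℕ) (D : List (ℕ × ℕ)) : ℕ :=
  sInf {h | ColValid k m h D}

lemma kMul_eq_addCol (k m : ℕ) (D : List (ℕ × ℕ)) :
    kMul k m D = addCol m (kMulHeight k m D) D :=
  rfl

/-- Satisfied by `D(λ)` when `c` is the first part of `λ`; `lt_of_start_boundary` records that
the last column could not have been placed one row lower. -/
structure KMulInvariant (k c : ℕ) (D : List (ℕ × ℕ)) : Prop where
  isSkewRows : IsSkewRows D
  hookBounded : HookBounded k D
  rowLenAntitone : RowLenAntitone D
  length_le_of_start_eq_zero : ∀ i, i < D.length → (rowOf D i).1 = 0 → D.length ≤ i + c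
  lt_of_start_boundary :
    ∀ i, i + 1 < D.length → 1 ≤ (rowOf D i).1 → (rowOf D (i + 1)).1 = 0 →
      k + (i + 1) < (rowOf D i).2 + D.length
  top_start_eq_zero : ∀ i, i + 1 = D.length → (rowOf D i).1 = 0

lemma kMulInvariant_nil (k c : ℕ) : KMulInvariant k c [] where
  isSkewRows := ⟨by simp, List.isChain_nil⟩
  hookBounded _ _ hij := absurd hij.1 (by simp)
  rowLenAntitone _ hi := absurd hi (by simp)
  length_le_of_start_eq_zero _ hi := absurd hi (by simp)
  lt_of_start_boundary _ hi := absurd hi (by simp)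
  top_start_eq_zero _ hi := absurd hi (by simp)

namespace KMulInvariant

variable {k c m : ℕ} {D : List (ℕ × ℕ)}

lemma colValid_iff (hI : KMulInvariant k c D) (hm : 0 < m) (hmk : m ≤ k) {h : ℕ} :
    ColValid k m h D ↔
      ColumnFits m h D ∧ ∀ i, h ≤ i → i < D.length → (rowOf D i).2 + (h + m) ≤ k + i :=
  _root_.colValid_iff hI.isSkewRows hI.hookBounded hI.rowLenAntitone hm hmk

lemma colValid_length (hI : KMulInvariant k c D) (hm : 0 < m) (hmk : m ≤ k) :
    ColValid k m D.length D :=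
  (hI.colValid_iff hm hmk).2
    ⟨⟨le_rfl, by omega, fun _ _ _ => by omega⟩, fun _ _ _ => by omega⟩

lemma colValid_kMulHeight (hI : KMulInvariant k c D) (hm : 0 < m) (hmk : m ≤ k) :
    ColValid k m (kMulHeight k m D) D :=
  Nat.sInf_mem (s := {h | ColValid k m h D}) ⟨_, hI.colValid_length hm hmk⟩

lemma colValid_of_succ (hI : KMulInvariant k c D) (hcm : c ≤ m) (hm : 0 < m) (hmk : m ≤ k)
    {g : ℕ} (hv : ColValid k m (g + 1) D) (hg0 : (rowOf D g).1 = 0)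
    (hshort : (rowOf D g).2 + m ≤ k) : ColValid k m g D := by
  obtain ⟨hF, hcol⟩ := (hI.colValid_iff hm hmk).1 hv
  have hgD : g < D.length := by have := hF.le_length; omega
  refine (hI.colValid_iff hm hmk).2 ⟨⟨hgD.le, ?_, fun i hgi hiD => ?_⟩, fun i hgi hiD => ?_⟩
  · have := hI.length_le_of_start_eq_zero g hgD hg0
    omega
  · rcases hgi.eq_or_lt with rfl | hlt
    · exact hg0
    · exact hF.start_eq_zero i hlt hiD
  · rcases hgi.eq_or_lt with rfl | hlt
    · omega
    · have := hcol i hlt hiD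
      omega

lemma lt_rowLen_add_of_succ_eq_kMulHeight (hI : KMulInvariant k c D) (hcm : c ≤ m)
    (hm : 0 < m) (hmk : m ≤ k) {g : ℕ} (hg : g + 1 = kMulHeight k m D) :
    k < (rowOf D g).2 + m := by
  have hv := hI.colValid_kMulHeight hm hmk
  rw [← hg] at hv
  have hF := ((hI.colValid_iff hm hmk).1 hv).1
  by_contra! hshort
  rcases Nat.eq_zero_or_pos (rowOf D g).1 with hg0 | hg1
  · have : kMulHeight k m D ≤ g := Nat.sInf_le (hI.colValid_of_succ hcm hm hmk hv hg0 hshort)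
    omega
  rcases hF.le_length.eq_or_lt with hlen | hlt
  · have := hI.top_start_eq_zero g hlen
    omega
  · have := hI.lt_of_start_boundary g hlt hg1 (hF.start_eq_zero (g + 1) le_rfl hlt)
    have := hF.length_le
    omega

lemma kMul (hI : KMulInvariant k c D) (hcm : c ≤ m) (hm : 0 < m) (hmk : m ≤ k) :
    KMulInvariant k m (kMul k m D) := by
  have hv := hI.colValid_kMulHeight hm hmk
  obtain ⟨hF, hcol⟩ := (hI.colValid_iff hm hmk).1 hv
  rw [kMul_eq_addCol]
  set h := kMulHeight k m D
  have hboundary : ∀ g, g + 1 = h → k < (rowOf D g).2 + m :=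
    fun _ hg => hI.lt_rowLen_add_of_succ_eq_kMulHeight hcm hm hmk hg
  have hle := hF.le_length
  refine ⟨hv.2.1, hv.2.2, ?_, ?_, ?_, ?_⟩
  · refine hF.rowLenAntitone_addCol hI.isSkewRows hI.rowLenAntitone fun g hg hgD => ?_
    have := hboundary g hg
    have := hcol (g + 1) hg.ge hgD
    omega
  all_goals simp only [hF.length_addCol]
  · intro i hi h0
    have := (hF.start_addCol_eq_zero_iff hi).1 h0
    omega
  · intro i hi hi1 hi0
    have hhi := (hF.start_addCol_eq_zero_iff hi).1 hi0
    have hih : ¬h ≤ i := fun hhi' => by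
      rw [(hF.start_addCol_eq_zero_iff (by omega)).2 hhi'] at hi1
      omega
    have := hboundary i (by omega)
    rw [rowOf_addCol_of_lt hle (by omega)]
    omega
  · intro i hi
    exact (hF.start_addCol_eq_zero_iff (by omega)).2 (by have := hF.length_le; omega)

end KMulInvariant

lemma kMulInvariant_kSkewDiagram {k : ℕ} :
    ∀ {l : List ℕ}, IsKBoundedPartition k l → KMulInvariant k (l.headD 0) (kSkewDiagram k l)
  | [], _ => kMulInvariant_nil k 0
  | m :: rest, ⟨⟨hsort, hpos⟩, hbd⟩ => by
    have hrest : IsKBoundedPartition k rest :=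
      ⟨⟨(List.pairwise_cons.1 hsort).2, fun x hx => hpos x (List.mem_cons_of_mem m hx)⟩,
        fun x hx => hbd x (List.mem_cons_of_mem m hx)⟩
    have hcm : rest.headD 0 ≤ m := by
      cases rest with
      | nil => simp
      | cons y t => exact (List.pairwise_cons.1 hsort).1 y (by simp)
    exact (kMulInvariant_kSkewDiagram hrest).kMul hcm (hpos m (by simp)) (hbd m (by simp))

theorem kConjugate_isKBoundedPartition_general (k : ℕ) (l : List ℕ)
    (hl : IsKBoundedPartition k l) :
    IsKBoundedPartition k (kConjugate k l) :=
  have hI := kMulInvariant_kSkewDiagram hl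
  isKBoundedPartition_map_snd hI.isSkewRows hI.hookBounded hI.rowLenAntitone

/-- For every positive integer `k` and every `k`-bounded partition
`λ`, the `k`-conjugate `λ^{ω_k}` (the row lengths of `D(λ)`, read bottom to top)
is again a `k`-bounded partition: a weakly decreasing sequence of positive
integers, each at most `k`. -/
theorem kConjugate_isKBoundedPartition (k : ℕ) (hk : 0 < k) (l : List ℕ)
    (hl : IsKBoundedPartition k l) :
    IsKBoundedPartition k (kConjugate k l) :=
  kConjugate_isKBoundedPartition_general k l hl
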